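/- Let H be a real inner product space (or more generally a normed space), let T be a bounded linear map and F fixed, and let L(v) = ‖T v - F‖². Suppose α‖v‖² ≤ ‖Tv‖² ≤ M‖v‖² for all v, and u satisfies Tu = F. If u_N minimizes ‖Tv - F‖² over a subset 𝓜 ⊂ H, then ‖u - u_N‖ ≤ (M/α)^{1/2} inf_{v ∈ 𝓜} ‖u - v‖. -/
import Mathlib


theorem cea_least_squares {H K : Type*} [NormedAddCommGroup H] [NormedSpace ℝ H]
    [NormedAddCommGroup K] [NormedSpace ℝ K]
    (T : H →L[ℝ] K) (α M : ℝ) (hα : 0 < α) (hαM : α ≤ M)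
    (hcoer : ∀ v : H, α * ‖v‖ ^ 2 ≤ ‖T v‖ ^ 2)
    (hcont : ∀ v : H, ‖T v‖ ^ 2 ≤ M * ‖v‖ ^ 2)
    (F : K) (u : H) (hu : T u = F)
    (𝓜 : Set H) (uN : H) (huN : uN ∈ 𝓜)
    (hmin : ∀ v ∈ 𝓜, ‖T uN - F‖ ^ 2 ≤ ‖T v - F‖ ^ 2) :
    ‖u - uN‖ ≤ Real.sqrt (M / α) * ⨅ v : 𝓜, ‖u - (v : H)‖ := by
  have hc : 0 < Real.sqrt (M / α) := Real.sqrt_pos.mpr (div_pos (hα.trans_le hαM) hα)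
  have key : ∀ v ∈ 𝓜, ‖u - uN‖ ≤ Real.sqrt (M / α) * ‖u - v‖ := by
    intro v hv
    have h1 : α * ‖u - uN‖ ^ 2 ≤ M * ‖u - v‖ ^ 2 := by
      calc α * ‖u - uN‖ ^ 2 ≤ ‖T (u - uN)‖ ^ 2 := hcoer _
        _ = ‖T uN - F‖ ^ 2 := by rw [map_sub, hu, norm_sub_rev]
        _ ≤ ‖T v - F‖ ^ 2 := hmin v hv
        _ = ‖T (u - v)‖ ^ 2 := by rw [map_sub, hu, norm_sub_rev]
        _ ≤ M * ‖u - v‖ ^ 2 := hcont _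
    have h2 : ‖u - uN‖ ^ 2 ≤ (Real.sqrt (M / α) * ‖u - v‖) ^ 2 := by
      rw [mul_pow, Real.sq_sqrt (le_of_lt (div_pos (hα.trans_le hαM) hα)),
        div_mul_eq_mul_div, le_div_iff₀ hα]
      linarith [h1]
    nlinarith [h2, norm_nonneg (u - uN), mul_nonneg hc.le (norm_nonneg (u - v))]
  have hne : Nonempty 𝓜 := ⟨⟨uN, huN⟩⟩
  rw [← div_le_iff₀' hc]
  exact le_ciInf fun v => by
    rw [div_le_iff₀' hc]; exact key v v.2
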